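/- arXiv:1409.3071 — 2 statements merged into one kernel-verified Lean document; each statement's English description precedes it below -/
import Mathlib

section
/- Let p < q and let a_1,…,a_p, b_1,…,b_q be positive reals satisfying e_q(b)/e_p(a) ≤ e_{q-1}(b)/e_{p-1}(a) ≤ ⋯ ≤ e_{q-p+1}(b)/e_1(a) ≤ e_{q-p}(b), so that R(x) = ∏_{i=1}^p (a_i+x) / ∏_{i=1}^q (b_i+x) is decreasing on [0,∞). Then for all x ≥ 0, pFq(a;b;x) ≤ e^{f_1 x}, where f_1 = ∏ a_i / ∏ b_i. -/
open Finset Real MeasureTheory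

noncomputable def rise (a : ℝ) (n : ℕ) : ℝ := ∏ k ∈ Finset.range n, (a + k)

noncomputable def esym {q : ℕ} (k : ℕ) (a : Fin q → ℝ) : ℝ :=
  ∑ s ∈ Finset.powersetCard k (Finset.univ : Finset (Fin q)), ∏ i ∈ s, a i

/-! The coefficients of the series are `f_n = ∏_{k<n} R(k)` with
`R(x) = ∏ (aᵢ + x) / ∏ (bᵢ + x)`. Telescoping the chain of ratios gives
`e_q(b) e_{p-j}(a) ≤ e_p(a) e_{q-j}(b)`, which compares the coefficients of `xʲ` in
`∏ (aᵢ + x) ∏ bᵢ` and `∏ aᵢ ∏ (bᵢ + x)`; so `R(x) ≤ R(0) = f₁` for `x ≥ 0`.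
Hence `f_n ≤ f₁ⁿ`, and the series is dominated termwise by that of `exp (f₁ x)`. -/

lemma esym_pos {q k : ℕ} (hk : k ≤ q) {a : Fin q → ℝ} (ha : ∀ i, 0 < a i) : 0 < esym k a :=
  sum_pos (fun s _ => prod_pos fun i _ => ha i) (powersetCard_nonempty.2 (by simpa using hk))

lemma esym_self {q : ℕ} (a : Fin q → ℝ) : esym q a = ∏ i, a i := by
  have h := powersetCard_self (univ : Finset (Fin q))
  rw [card_univ, Fintype.card_fin] at h
  simp [esym, h]

lemma prod_add_eq_sum_esym {p : ℕ} (a : Fin p → ℝ) (x : ℝ) :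
    ∏ i, (a i + x) = ∑ j ∈ range (p + 1), esym (p - j) a * x ^ j := by
  rw [prod_add, sum_powerset, card_univ, Fintype.card_fin, ← sum_range_reflect]
  refine sum_congr rfl fun j hj => ?_
  rw [show p + 1 - 1 - j = p - j by omega, esym, sum_mul]
  refine sum_congr rfl fun s hs => ?_
  rw [mem_powersetCard] at hs
  rw [prod_const, card_sdiff_of_subset hs.1, card_univ, Fintype.card_fin, hs.2,
    Nat.sub_sub_self (by simp at hj; omega)]

lemma esym_ratio_le_of_chain {p q : ℕ} {a : Fin p → ℝ} {b : Fin q → ℝ}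
    (hchain : ∀ j : ℕ, j < p →
      esym (q - j) b / esym (p - j) a ≤ esym (q - j - 1) b / esym (p - j - 1) a)
    {j : ℕ} (hj : j ≤ p) :
    esym q b / esym p a ≤ esym (q - j) b / esym (p - j) a := by
  induction j with
  | zero => rfl
  | succ j ih => exact (ih (by omega)).trans (hchain j hj)

lemma prod_add_div_prod_add_le {p q : ℕ} (hpq : p ≤ q) {a : Fin p → ℝ} {b : Fin q → ℝ}
    (ha : ∀ i, 0 < a i) (hb : ∀ i, 0 < b i)
    (hchain : ∀ j : ℕ, j < p →
      esym (q - j) b / esym (p - j) a ≤ esym (q - j - 1) b / esym (p - j - 1) a)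
    {x : ℝ} (hx : 0 ≤ x) :
    (∏ i, (a i + x)) / ∏ i, (b i + x) ≤ (∏ i, a i) / ∏ i, b i := by
  have hbx : 0 < ∏ i, (b i + x) := prod_pos fun i _ => by linarith [hb i]
  rw [div_le_div_iff₀ hbx (prod_pos fun i _ => hb i), prod_add_eq_sum_esym,
    prod_add_eq_sum_esym, ← esym_self a, ← esym_self b, sum_mul, mul_sum]
  refine (sum_le_sum fun j hj => ?_).trans
    (sum_le_sum_of_subset_of_nonneg (range_subset_range.2 (by omega)) fun j _ _ => ?_)
  · have hjp : j ≤ p := by simp at hj; omega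
    have hratio := esym_ratio_le_of_chain hchain hjp
    rw [div_le_div_iff₀ (esym_pos le_rfl ha) (esym_pos (Nat.sub_le p j) ha)] at hratio
    calc esym (p - j) a * x ^ j * esym q b = esym q b * esym (p - j) a * x ^ j := by ring
      _ ≤ esym (q - j) b * esym p a * x ^ j := by gcongr
      _ = esym p a * (esym (q - j) b * x ^ j) := by ring
  · have := esym_pos (Nat.sub_le q j) hb
    have := esym_pos le_rfl ha
    positivity

lemma prod_rise_div_prod_rise {p q : ℕ} (a : Fin p → ℝ) (b : Fin q → ℝ) (n : ℕ) :
    (∏ i, rise (a i) n) / ∏ i, rise (b i) n =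
      ∏ k ∈ range n, (∏ i, (a i + k)) / ∏ i, (b i + k) := by
  simp only [rise]
  rw [prod_comm, prod_comm (s := univ), prod_div_distrib]

lemma tsum_mul_pow_div_factorial_le_exp {f : ℕ → ℝ} {c x : ℝ} (hf₀ : ∀ n, 0 ≤ f n)
    (hf : ∀ n, f n ≤ c ^ n) (hx : 0 ≤ x) :
    ∑' n, f n * x ^ n / n.factorial ≤ exp (c * x) := by
  have hle : ∀ n, f n * x ^ n / n.factorial ≤ (c * x) ^ n / n.factorial := fun n => by
    rw [mul_pow]; gcongr; exact hf n
  have hexp := summable_pow_div_factorial (c * x)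
  rw [exp_eq_exp_ℝ, NormedSpace.exp_eq_tsum_div]
  exact Summable.tsum_le_tsum hle
    (hexp.of_nonneg_of_le (fun n => by have := hf₀ n; positivity) hle) hexp

theorem stmt6 (p q : ℕ) (hpq : p < q) (a : Fin p → ℝ) (b : Fin q → ℝ)
    (ha : ∀ i, 0 < a i) (hb : ∀ i, 0 < b i)
    (hchain : ∀ j : ℕ, j < p →
      esym (q - j) b / esym (p - j) a ≤ esym (q - j - 1) b / esym (p - j - 1) a)
    (x : ℝ) (hx : 0 ≤ x) :
    (∑' n : ℕ, (∏ i, rise (a i) n) / (∏ i, rise (b i) n) * x ^ n / (Nat.factorial n))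
      ≤ Real.exp ((∏ i, a i) / (∏ i, b i) * x) := by
  have hratio_pos : ∀ k : ℕ, 0 < (∏ i, (a i + k)) / ∏ i, (b i + k) := fun k =>
    div_pos (prod_pos fun i _ => by linarith [ha i]) (prod_pos fun i _ => by linarith [hb i])
  refine tsum_mul_pow_div_factorial_le_exp (fun n => ?_) (fun n => ?_) hx
  · rw [prod_rise_div_prod_rise]
    exact prod_nonneg fun k _ => (hratio_pos k).le
  · rw [prod_rise_div_prod_rise]
    refine (prod_le_prod (fun k _ => (hratio_pos k).le) fun k _ =>
      prod_add_div_prod_add_le hpq.le ha hb hchain k.cast_nonneg).trans_eq ?_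
    rw [prod_const, card_range]
end

section
/- For c > 0 and x ≥ 0, the function 0F1(-;c;x) = ∑_{n≥0} x^n/((c)_n n!) satisfies the lower bound 0F1(-;c;x) ≥ e^{√(4x+c²) − c} · ((1/2) + (1/(2c))√(4x+c²))^{-c}. -/
/-!
Write `F_b = ₀F₁(-; b; ·)`, so that `F_b' = F_{b+1} / b`. By Chu–Vandermonde the Cauchy
product `F_b F_{b'}` has explicit coefficients, which gives the Turán-type inequality
`c F_c F_{c+2} ≤ (c+1) F_{c+1}²`; together with the contiguous relation
`x F_{c+2} = c(c+1)(F_c - F_{c+1})` this yields `F_{c+1} / (c F_c) ≥ 2 / (√(4x+c²) + c)`.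
The right-hand side is the derivative of the logarithm `ℓ` of the claimed bound, and
`ℓ(0) = 0 = log F_c(0)`, so `log F_c - ℓ` is nondecreasing on `[0, ∞)`, hence nonnegative.
-/

open Finset Real MeasureTheory

lemma rise_succ (a : ℝ) (n : ℕ) : rise a (n + 1) = rise a n * (a + n) :=
  prod_range_succ _ _

lemma rise_succ' (a : ℝ) (n : ℕ) : rise a (n + 1) = a * rise (a + 1) n := by
  simp only [rise, prod_range_succ', Nat.cast_add, Nat.cast_one, Nat.cast_zero, add_zero]
  rw [mul_comm]
  congr 1
  exact prod_congr rfl fun k _ => by ring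

lemma rise_pos {a : ℝ} (ha : 0 < a) (n : ℕ) : 0 < rise a n :=
  prod_pos fun k _ => by positivity

lemma pow_le_rise {a : ℝ} (ha : 0 ≤ a) (n : ℕ) : a ^ n ≤ rise a n := by
  simpa [rise] using prod_le_prod (fun _ _ => ha) (fun k _ => le_add_of_nonneg_right k.cast_nonneg)
    (s := range n) (f := fun _ => a)

lemma descPochhammer_smeval_eq_rise (a : ℝ) (n : ℕ) :
    (descPochhammer ℤ n).smeval (a + n - 1) = rise a n := by
  rw [← Polynomial.aeval_eq_smeval, Polynomial.aeval_def, Polynomial.eval₂_eq_eval_map,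
    descPochhammer_map, descPochhammer_eval_eq_prod_range, rise, ← prod_range_reflect]
  refine prod_congr rfl fun j hj => ?_
  rw [Nat.cast_sub (by simp at hj; omega), Nat.cast_sub (by simp at hj; omega)]
  push_cast; ring

lemma rise_add (a : ℝ) (m n : ℕ) : rise a (m + n) = rise a m * rise (a + m) n := by
  rw [rise, prod_range_add]
  congr 1
  exact prod_congr rfl fun k _ => by push_cast; ring

theorem rise_vandermonde (a b : ℝ) (n : ℕ) :
    rise (a + b + n - 1) n =
      ∑ ij ∈ antidiagonal n,
        (n.choose ij.1 : ℝ) * (rise (a + ij.2) ij.1 * rise (b + ij.1) ij.2) := by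
  rw [← descPochhammer_smeval_eq_rise,
    show a + b + n - 1 + n - 1 = (a + n - 1) + (b + n - 1) by ring,
    Ring.descPochhammer_smeval_add _ (Commute.all _ _)]
  refine sum_congr rfl fun ⟨i, j⟩ hij => ?_
  obtain rfl : i + j = n := HasAntidiagonal.mem_antidiagonal.mp hij
  rw [← descPochhammer_smeval_eq_rise, ← descPochhammer_smeval_eq_rise]
  push_cast
  ring_nf

noncomputable def hyp0F1Term (b x : ℝ) (n : ℕ) : ℝ := x ^ n / (rise b n * n.factorial)

noncomputable def hyp0F1 (b x : ℝ) : ℝ := ∑' n, hyp0F1Term b x n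

section hyp0F1

variable {b : ℝ}

lemma hyp0F1Term_zero (b x : ℝ) : hyp0F1Term b x 0 = 1 := by
  simp [hyp0F1Term, rise]

lemma hyp0F1Term_succ (b x : ℝ) (n : ℕ) :
    hyp0F1Term b x (n + 1) = x * hyp0F1Term (b + 1) x n / (b * (n + 1)) := by
  simp only [hyp0F1Term, rise_succ', Nat.factorial_succ, Nat.cast_mul, Nat.cast_succ]
  rw [mul_div_assoc', div_div]
  congr 1 <;> ring

lemma hyp0F1Term_nonneg (hb : 0 < b) {x : ℝ} (hx : 0 ≤ x) (n : ℕ) :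
    0 ≤ hyp0F1Term b x n := by
  have := rise_pos hb n
  unfold hyp0F1Term
  positivity

lemma hyp0F1Term_le_of_le (hb : 0 < b) {x y : ℝ} (hx : 0 ≤ x) (hxy : x ≤ y) (n : ℕ) :
    hyp0F1Term b x n ≤ hyp0F1Term b y n := by
  have := rise_pos hb n
  unfold hyp0F1Term
  gcongr

lemma norm_hyp0F1Term (hb : 0 < b) (x : ℝ) (n : ℕ) :
    ‖hyp0F1Term b x n‖ = hyp0F1Term b |x| n := by
  have := rise_pos hb n
  simp only [hyp0F1Term]
  rw [norm_div, norm_pow, Real.norm_eq_abs, Real.norm_of_nonneg (by positivity)]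

lemma summable_norm_hyp0F1Term (hb : 0 < b) (x : ℝ) :
    Summable fun n => ‖hyp0F1Term b x n‖ := by
  refine .of_nonneg_of_le (fun _ => norm_nonneg _) (fun n => ?_)
    (summable_pow_div_factorial (|x| / b))
  rw [norm_hyp0F1Term hb, hyp0F1Term, div_pow, div_div]
  gcongr
  exact pow_le_rise hb.le n

lemma summable_hyp0F1Term (hb : 0 < b) (x : ℝ) : Summable (hyp0F1Term b x) :=
  (summable_norm_hyp0F1Term hb x).of_norm

lemma hyp0F1_zero (b : ℝ) : hyp0F1 b 0 = 1 := by
  rw [hyp0F1, tsum_eq_single 0 fun n hn => by simp [hyp0F1Term, zero_pow hn], hyp0F1Term_zero]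

lemma one_le_hyp0F1 (hb : 0 < b) {x : ℝ} (hx : 0 ≤ x) : 1 ≤ hyp0F1 b x :=
  hyp0F1Term_zero b x ▸
    (summable_hyp0F1Term hb x).le_tsum 0 fun n _ => hyp0F1Term_nonneg hb hx n

lemma hyp0F1_eq_one_add (hb : 0 < b) (x : ℝ) :
    hyp0F1 b x = 1 + ∑' n, hyp0F1Term b x (n + 1) := by
  rw [hyp0F1, (summable_hyp0F1Term hb x).tsum_eq_zero_add, hyp0F1Term_zero]

lemma hasDerivAt_hyp0F1Term_succ (hb : 0 < b) (x : ℝ) (n : ℕ) :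
    HasDerivAt (fun y => hyp0F1Term b y (n + 1)) (hyp0F1Term (b + 1) x n / b) x := by
  refine ((hasDerivAt_pow (n + 1) x).div_const _).congr_deriv ?_
  have := rise_pos (a := b + 1) (by linarith) n
  simp only [hyp0F1Term, rise_succ', Nat.factorial_succ, Nat.cast_mul, Nat.cast_succ,
    Nat.add_sub_cancel]
  field_simp

theorem hasDerivAt_hyp0F1 (hb : 0 < b) (x : ℝ) :
    HasDerivAt (hyp0F1 b) (hyp0F1 (b + 1) x / b) x := by
  have hb1 : 0 < b + 1 := by linarith
  set R := |x| + 1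
  have hbound : ∀ n, ∀ y ∈ Metric.ball (0 : ℝ) R,
      ‖hyp0F1Term (b + 1) y n / b‖ ≤ hyp0F1Term (b + 1) R n / b := fun n y hy => by
    rw [norm_div, norm_hyp0F1Term hb1, Real.norm_of_nonneg hb.le]
    rw [mem_ball_zero_iff, Real.norm_eq_abs] at hy
    gcongr
    exact hyp0F1Term_le_of_le hb1 (abs_nonneg y) hy.le n
  have hshifted := hasDerivAt_tsum_of_isPreconnected
    ((summable_hyp0F1Term hb1 R).div_const b) Metric.isOpen_ball (convex_ball 0 R).isPreconnected
    (fun n y _ => hasDerivAt_hyp0F1Term_succ hb y n) hbound (Metric.mem_ball_self (by positivity))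
    ((summable_nat_add_iff 1).mpr (summable_hyp0F1Term hb 0))
    (by simp [R] : x ∈ Metric.ball (0 : ℝ) R)
  rw [tsum_div_const] at hshifted
  rw [show hyp0F1 b = fun y => 1 + _ from funext (hyp0F1_eq_one_add hb)]
  exact hshifted.const_add 1

lemma sum_antidiagonal_hyp0F1Term_mul (hb : 0 < b) {b' : ℝ} (hb' : 0 < b') (x : ℝ) (n : ℕ) :
    ∑ ij ∈ antidiagonal n, hyp0F1Term b x ij.1 * hyp0F1Term b' x ij.2 =
      x ^ n * rise (b + b' + n - 1) n / (rise b n * rise b' n * n.factorial) := by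
  rw [add_comm b b', rise_vandermonde, mul_sum, sum_div]
  refine sum_congr rfl fun ⟨i, j⟩ hij => ?_
  obtain rfl : i + j = n := HasAntidiagonal.mem_antidiagonal.mp hij
  have := rise_pos hb i
  have := rise_pos hb' j
  have := rise_pos (a := b + i) (by positivity) j
  have := rise_pos (a := b' + j) (by positivity) i
  have : (0 : ℝ) < (i + j).choose j := by exact_mod_cast Nat.choose_pos (by omega)
  rw [rise_add b i j, add_comm i j, rise_add b' j i, add_comm j i,
    ← Nat.add_choose_mul_factorial_mul_factorial i j, Nat.choose_symm_add]
  simp only [hyp0F1Term, Nat.cast_mul, pow_add]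
  field_simp

lemma hasSum_hyp0F1_mul_hyp0F1 {b' : ℝ} (hb : 0 < b) (hb' : 0 < b') (x : ℝ) :
    HasSum (fun n : ℕ => x ^ n * rise (b + b' + n - 1) n / (rise b n * rise b' n * n.factorial))
      (hyp0F1 b x * hyp0F1 b' x) := by
  simp only [← sum_antidiagonal_hyp0F1Term_mul hb hb' x]
  rw [hyp0F1, hyp0F1, tsum_mul_tsum_eq_tsum_sum_antidiagonal_of_summable_norm
    (summable_norm_hyp0F1Term hb x) (summable_norm_hyp0F1Term hb' x)]
  exact (summable_norm_sum_mul_antidiagonal_of_summable_norm (summable_norm_hyp0F1Term hb x)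
    (summable_norm_hyp0F1Term hb' x)).of_norm.hasSum

lemma mul_rise_sq_le (hb : 0 < b) (n : ℕ) :
    b * rise (b + 1) n ^ 2 ≤ (b + 1) * (rise b n * rise (b + 2) n) := by
  have h₁ : b * rise (b + 1) n = rise b n * (b + n) := by rw [← rise_succ', rise_succ]
  have h₂ : (b + 1) * rise (b + 2) n = rise (b + 1) n * (b + 1 + n) := by
    rw [show b + 2 = b + 1 + 1 by ring, ← rise_succ', rise_succ]
  have := rise_pos hb n
  have := rise_pos (a := b + 1) (by linarith) n
  calc b * rise (b + 1) n ^ 2 = rise b n * rise (b + 1) n * (b + n) := by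
        rw [sq, ← mul_assoc, h₁]; ring
    _ ≤ rise b n * rise (b + 1) n * (b + 1 + n) := by gcongr; linarith
    _ = (b + 1) * (rise b n * rise (b + 2) n) := by rw [mul_left_comm, h₂]; ring

theorem mul_hyp0F1_mul_hyp0F1_add_two_le (hb : 0 < b) {x : ℝ} (hx : 0 ≤ x) :
    b * (hyp0F1 b x * hyp0F1 (b + 2) x) ≤ (b + 1) * hyp0F1 (b + 1) x ^ 2 := by
  have hb1 : 0 < b + 1 := by linarith
  refine hasSum_le (fun n => ?_) ((hasSum_hyp0F1_mul_hyp0F1 hb (by linarith) x).mul_left b)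
    (sq (hyp0F1 (b + 1) x) ▸ (hasSum_hyp0F1_mul_hyp0F1 hb1 hb1 x).mul_left (b + 1))
  have := rise_pos hb n
  have := rise_pos hb1 n
  have := rise_pos (a := b + 2) (by linarith) n
  have := rise_pos (a := b + 1 + (b + 1) + n - 1) (by linarith [n.cast_nonneg (α := ℝ)]) n
  rw [show b + (b + 2) + n - 1 = b + 1 + (b + 1) + n - 1 by ring]
  simp only [mul_div_assoc']
  rw [div_le_div_iff₀ (by positivity) (by positivity)]
  have hK : 0 ≤ x ^ n * rise (b + 1 + (b + 1) + n - 1) n * n.factorial := by positivity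
  nlinarith [mul_le_mul_of_nonneg_left (mul_rise_sq_le hb n) hK]

lemma hyp0F1Term_contiguous (hb : 0 < b) (x : ℝ) (n : ℕ) :
    b * (b + 1) * (hyp0F1Term b x (n + 1) - hyp0F1Term (b + 1) x (n + 1)) =
      x * hyp0F1Term (b + 2) x n := by
  have h₂ : (b + 1) * rise (b + 2) n = rise (b + 1) n * (b + 1 + n) := by
    rw [show b + 2 = b + 1 + 1 by ring, ← rise_succ', rise_succ]
  have := rise_pos (a := b + 1) (by linarith) n
  have := rise_pos (a := b + 2) (by linarith) n
  rw [hyp0F1Term_succ, hyp0F1Term_succ, show b + 1 + 1 = b + 2 by ring]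
  simp only [hyp0F1Term]
  field_simp
  linear_combination (x * x ^ n) * h₂

theorem hyp0F1_contiguous (hb : 0 < b) (x : ℝ) :
    x * hyp0F1 (b + 2) x = b * (b + 1) * (hyp0F1 b x - hyp0F1 (b + 1) x) := by
  have hb1 : 0 < b + 1 := by linarith
  rw [hyp0F1_eq_one_add hb, hyp0F1_eq_one_add hb1, add_sub_add_left_eq_sub,
    ← ((summable_nat_add_iff 1).mpr (summable_hyp0F1Term hb x)).tsum_sub
      ((summable_nat_add_iff 1).mpr (summable_hyp0F1Term hb1 x)), ← tsum_mul_left,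
    hyp0F1, ← tsum_mul_left]
  exact tsum_congr fun n => (hyp0F1Term_contiguous hb x n).symm

end hyp0F1

theorem two_mul_hyp0F1_le {c x : ℝ} (hc : 0 < c) (hx : 0 ≤ x) :
    2 * c * hyp0F1 c x ≤ (√(4 * x + c ^ 2) + c) * hyp0F1 (c + 1) x := by
  have hcontig := hyp0F1_contiguous hc x
  have hturan := mul_hyp0F1_mul_hyp0F1_add_two_le hc hx
  set F := hyp0F1 c x
  set A := hyp0F1 (c + 1) x
  set D := hyp0F1 (c + 2) x
  have hA : 0 ≤ A := zero_le_one.trans (one_le_hyp0F1 (by linarith) hx)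
  have hsq : (2 * c * F - c * A) ^ 2 ≤ (√(4 * x + c ^ 2) * A) ^ 2 := by
    rw [mul_pow, sq_sqrt (by positivity), ← sub_nonneg]
    have key : ((4 * x + c ^ 2) * A ^ 2 - (2 * c * F - c * A) ^ 2) * (c + 1) =
        4 * x * ((c + 1) * A ^ 2 - c * (F * D)) := by
      linear_combination (4 * c) * F * hcontig
    refine nonneg_of_mul_nonneg_left ?_ (by linarith : (0 : ℝ) < c + 1)
    rw [key]
    exact mul_nonneg (by positivity) (by linarith)
  nlinarith [abs_le_of_sq_le_sq' hsq (by positivity)]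

noncomputable def lowerBoundExponent (c x : ℝ) : ℝ :=
  √(4 * x + c ^ 2) - c - c * log (1 / 2 + 1 / (2 * c) * √(4 * x + c ^ 2))

lemma exp_lowerBoundExponent {c : ℝ} (hc : 0 < c) (x : ℝ) :
    exp (lowerBoundExponent c x) =
      exp (√(4 * x + c ^ 2) - c) * (1 / 2 + 1 / (2 * c) * √(4 * x + c ^ 2)) ^ (-c) := by
  rw [lowerBoundExponent, sub_eq_add_neg (_ - c), exp_add, rpow_def_of_pos (by positivity)]
  ring_nf

lemma lowerBoundExponent_zero {c : ℝ} (hc : 0 < c) : lowerBoundExponent c 0 = 0 := by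
  rw [lowerBoundExponent, mul_zero, zero_add, sqrt_sq hc.le,
    show 1 / 2 + 1 / (2 * c) * c = 1 by field_simp; ring, log_one]
  ring

lemma hasDerivAt_lowerBoundExponent {c x : ℝ} (hc : 0 < c) (hx : 0 < 4 * x + c ^ 2) :
    HasDerivAt (lowerBoundExponent c) (2 / (√(4 * x + c ^ 2) + c)) x := by
  have hsqrt : HasDerivAt (fun y => √(4 * y + c ^ 2)) (4 / (2 * √(4 * x + c ^ 2))) x :=
    (((hasDerivAt_id x).const_mul 4).add_const _).sqrt hx.ne' |>.congr_deriv (by simp)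
  have hB : 0 < 1 / 2 + 1 / (2 * c) * √(4 * x + c ^ 2) := by positivity
  have hlog := (((hsqrt.const_mul (1 / (2 * c))).const_add (1 / 2)).log hB.ne').const_mul c
  refine ((hsqrt.sub_const c).sub hlog).congr_deriv ?_
  field_simp
  ring

theorem lowerBoundExponent_le_log_hyp0F1 {c x : ℝ} (hc : 0 < c) (hx : 0 ≤ x) :
    lowerBoundExponent c x ≤ log (hyp0F1 c x) := by
  have hF : ∀ y, 0 ≤ y → 0 < hyp0F1 c y := fun y hy =>
    zero_lt_one.trans_le (one_le_hyp0F1 hc hy)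
  have hderiv : ∀ y, 0 ≤ y → HasDerivAt (fun z => log (hyp0F1 c z) - lowerBoundExponent c z)
      (hyp0F1 (c + 1) y / c / hyp0F1 c y - 2 / (√(4 * y + c ^ 2) + c)) y := fun y hy =>
    ((hasDerivAt_hyp0F1 hc y).log (hF y hy).ne').sub
      (hasDerivAt_lowerBoundExponent hc (by positivity))
  have hmono : MonotoneOn (fun z => log (hyp0F1 c z) - lowerBoundExponent c z) (Set.Ici 0) := by
    refine monotoneOn_of_hasDerivWithinAt_nonneg (convex_Ici 0)
      (fun y hy => (hderiv y hy).continuousAt.continuousWithinAt)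
      (fun y hy => (hderiv y (interior_subset hy)).hasDerivWithinAt) fun y hy => ?_
    have hy : 0 ≤ y := interior_subset (s := Set.Ici (0 : ℝ)) hy
    have := hF y hy
    rw [sub_nonneg, div_div, div_le_div_iff₀ (by positivity) (by positivity)]
    linarith [two_mul_hyp0F1_le hc hy]
  have := hmono Set.self_mem_Ici hx hx
  simp only [hyp0F1_zero, log_one, lowerBoundExponent_zero hc, sub_zero] at this
  linarith

theorem stmt9 (c x : ℝ) (hc : 0 < c) (hx : 0 ≤ x) :
    Real.exp (Real.sqrt (4 * x + c ^ 2) - c) *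
        ((1 / 2 : ℝ) + (1 / (2 * c)) * Real.sqrt (4 * x + c ^ 2)) ^ (-c)
      ≤ ∑' n : ℕ, x ^ n / (rise c n * (Nat.factorial n)) := by
  rw [← exp_lowerBoundExponent hc x]
  calc exp (lowerBoundExponent c x) ≤ exp (log (hyp0F1 c x)) :=
        exp_le_exp.mpr (lowerBoundExponent_le_log_hyp0F1 hc hx)
    _ = hyp0F1 c x := exp_log (zero_lt_one.trans_le (one_le_hyp0F1 hc hx))
end
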